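/- arXiv:1611.08382 — 9 statements merged into one kernel-verified Lean document; each statement's English description precedes it below -/
import Mathlib

section
/- Let S be a nonempty set, A a C*-algebra, K : S × S → A a hermitian kernel and s₀ ∈ S a fixed point. Then K is conditionally positive definite if and only if the kernel L : S × S → A defined by L(s,t) := (1/2)(K(s,t) − K(s,s₀) − K(s₀,t) + K(s₀,s₀)) is positive definite. -/
/-- A kernel `K : S × S → A` is hermitian if `K (t, s) = K (s, t)*` for all `s, t`. -/
def IsHermitianKernel {S A : Type*} [Star A] (K : S → S → A) : Prop :=
  ∀ s t, K t s = star (K s t)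

/-- A kernel `L` with values in a C*-algebra is positive definite if for every `n ≥ 1`,
all `s₁, …, sₙ ∈ S` and all `a₁, …, aₙ ∈ A` one has `∑ᵢⱼ aᵢ* L(sᵢ, sⱼ) aⱼ ≥ 0`. -/
def IsPosDefKernel {S A : Type*} [NonUnitalCStarAlgebra A] [PartialOrder A]
    (L : S → S → A) : Prop :=
  ∀ (n : ℕ) (s : Fin n → S) (a : Fin n → A),
    0 ≤ ∑ i, ∑ j, star (a i) * L (s i) (s j) * a j

/-- A kernel `K` with values in a C*-algebra is conditionally positive definite if for every
`n ≥ 2`, all `s₁, …, sₙ ∈ S` and all `a₁, …, aₙ ∈ A` with `∑ᵢ aᵢ = 0` one has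
`∑ᵢⱼ aᵢ* K(sᵢ, sⱼ) aⱼ ≥ 0`. -/
def IsCondPosDefKernel {S A : Type*} [NonUnitalCStarAlgebra A] [PartialOrder A]
    (K : S → S → A) : Prop :=
  ∀ (n : ℕ), 2 ≤ n → ∀ (s : Fin n → S) (a : Fin n → A), (∑ i, a i) = 0 →
    0 ≤ ∑ i, ∑ j, star (a i) * K (s i) (s j) * a j

private lemma expand_aux {S A : Type*} [NonUnitalCStarAlgebra A]
    (n : ℕ) (K : S → S → A) (s : Fin n → S) (s₀ : S) (a : Fin n → A) :
    ∑ i, ∑ j, star (a i) * (K (s i) (s j) - K (s i) s₀ - K s₀ (s j) + K s₀ s₀) * a j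
    = (∑ i, ∑ j, star (a i) * K (s i) (s j) * a j)
      + (∑ i, star (a i) * K (s i) s₀ * (-(∑ k, a k)))
      + (∑ j, star (-(∑ k, a k)) * K s₀ (s j) * a j)
      + star (-(∑ k, a k)) * K s₀ s₀ * (-(∑ k, a k)) := by
  simp only [star_neg, star_sum, mul_sub, sub_mul, mul_add, add_mul, neg_mul, mul_neg,
    neg_neg, Finset.sum_sub_distrib, Finset.sum_add_distrib, Finset.sum_neg_distrib,
    Finset.mul_sum, Finset.sum_mul]
  rw [Finset.sum_comm (f := fun k j => star (a k) * K s₀ (s j) * a j),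
    Finset.sum_comm (f := fun k j => star (a k) * K s₀ s₀ * a j)]
  abel

private lemma conj_smul_aux {A : Type*} [NonUnitalCStarAlgebra A]
    (c : ℂ) (hc : star c = c) (x y m : A) :
    star (c • x) * m * (c • y) = (c * c) • (star x * m * y) := by
  rw [star_smul, hc, smul_mul_assoc, smul_mul_assoc, mul_smul_comm, smul_smul]

/-- A hermitian kernel `K` is conditionally positive definite if and only if the kernel
`L(s,t) := (1/2)(K(s,t) − K(s,s₀) − K(s₀,t) + K(s₀,s₀))` is positive definite. -/
theorem condPosDef_iff_posDef_shift {S A : Type*} [Nonempty S]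
    [NonUnitalCStarAlgebra A] [PartialOrder A] [StarOrderedRing A]
    (K : S → S → A) (hK : IsHermitianKernel K) (s₀ : S) :
    IsCondPosDefKernel K ↔
      IsPosDefKernel (fun s t => (2⁻¹ : ℂ) • (K s t - K s s₀ - K s₀ t + K s₀ s₀)) := by
  have hc : star ((Real.sqrt 2⁻¹ : ℝ) : ℂ) = ((Real.sqrt 2⁻¹ : ℝ) : ℂ) := by
    simp [Complex.conj_ofReal]
  have hcc : ((Real.sqrt 2⁻¹ : ℝ) : ℂ) * ((Real.sqrt 2⁻¹ : ℝ) : ℂ) = (2⁻¹ : ℂ) := by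
    rw [← Complex.ofReal_mul, Real.mul_self_sqrt (by norm_num)]
    norm_num
  set c : ℂ := ((Real.sqrt 2⁻¹ : ℝ) : ℂ) with hc_def
  have hd : star ((Real.sqrt 2 : ℝ) : ℂ) = ((Real.sqrt 2 : ℝ) : ℂ) := by
    simp [Complex.conj_ofReal]
  have hdd : ((Real.sqrt 2 : ℝ) : ℂ) * ((Real.sqrt 2 : ℝ) : ℂ) = (2 : ℂ) := by
    rw [← Complex.ofReal_mul, Real.mul_self_sqrt (by norm_num)]
    norm_num
  set d : ℂ := ((Real.sqrt 2 : ℝ) : ℂ) with hd_def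
  constructor
  · intro h n s a
    rcases Nat.eq_zero_or_pos n with hn | hn
    · subst hn; simp
    · set a' : Fin (n + 1) → A := Fin.snoc (fun i => c • a i) (-(∑ k, c • a k)) with ha'
      set s' : Fin (n + 1) → S := Fin.snoc s s₀ with hs'
      have hsum : (∑ i, a' i) = 0 := by
        simp [ha', Fin.sum_univ_castSucc]
      have h0 := h (n + 1) (by omega) s' a' hsum
      have hsplit : ∑ i, ∑ j, star (a' i) * K (s' i) (s' j) * a' j
          = (∑ i, ∑ j, star (c • a i) * K (s i) (s j) * (c • a j))
            + (∑ i, star (c • a i) * K (s i) s₀ * (-(∑ k, c • a k)))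
            + (∑ j, star (-(∑ k, c • a k)) * K s₀ (s j) * (c • a j))
            + star (-(∑ k, c • a k)) * K s₀ s₀ * (-(∑ k, c • a k)) := by
        simp only [ha', hs', Fin.sum_univ_castSucc, Fin.snoc_castSucc, Fin.snoc_last,
          Finset.sum_add_distrib]
        abel
      rw [hsplit, ← expand_aux] at h0
      have key : ∀ i j, star (a i) *
            ((2⁻¹ : ℂ) • (K (s i) (s j) - K (s i) s₀ - K s₀ (s j) + K s₀ s₀)) * a j
          = star (c • a i) * (K (s i) (s j) - K (s i) s₀ - K s₀ (s j) + K s₀ s₀) * (c • a j) := by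
        intro i j
        rw [conj_smul_aux c hc, hcc, mul_smul_comm, smul_mul_assoc]
      simp only [key]
      exact h0
  · intro h n hn s a hsum
    have h0 := h n s (fun i => d • a i)
    have key : ∀ i j, star (d • a i) *
          ((2⁻¹ : ℂ) • (K (s i) (s j) - K (s i) s₀ - K s₀ (s j) + K s₀ s₀)) * (d • a j)
        = star (a i) * (K (s i) (s j) - K (s i) s₀ - K s₀ (s j) + K s₀ s₀) * a j := by
      intro i j
      rw [conj_smul_aux d hd, hdd, mul_smul_comm, smul_mul_assoc, smul_smul]
      norm_num
    simp only [key] at h0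
    rw [expand_aux n K s s₀ a, hsum] at h0
    simpa using h0
end

section
/- Let A be a C*-algebra, n ≥ 2, and [a_{ij}] a hermitian matrix in Mₙ(A). Then [a_{ij}] is conditionally positive if and only if there exists an index m with 1 ≤ m ≤ n such that the matrix [a_{ij} − a_{im} − a_{mj} + a_{mm}] is a positive element of the C*-algebra Mₙ(A). -/
/-!
On vectors with `∑ aᵢ = 0` the three correction terms of `Sₘ = [aᵢⱼ − aᵢₘ − aₘⱼ + aₘₘ]` contribute
nothing, so the quadratic forms of `[aᵢⱼ]` and of `Sₘ` agree there. The `m`-th row and column of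
`Sₘ` vanish, so any vector may be corrected in its `m`-th coordinate to have sum zero without
changing the value of the form of `Sₘ`. Hence `[aᵢⱼ]` is conditionally positive iff the form of
`Sₘ` is nonnegative on all of `Aⁿ`, for every `m`.

A hermitian `N ∈ Mₙ(A)` with nonnegative form is positive: its negative part `Q` satisfies
`Q N Q = -Q³`, whose diagonal is nonnegative by hypothesis, while `Q³ ≥ 0`. A positive matrix
`Bᴴ B` with nonpositive diagonal has zero columns, so `Q³ = 0` and then `Q = 0`.
-/

open Matrix
/-- A matrix `[aᵢⱼ] ∈ Mₙ(A)` is conditionally positive if `∑ᵢⱼ aᵢ* aᵢⱼ aⱼ ≥ 0` for all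
`a₁, …, aₙ ∈ A` with `∑ᵢ aᵢ = 0`. -/
def Matrix.IsCondPos {A : Type*} {n : ℕ} [NonUnitalCStarAlgebra A] [PartialOrder A]
    (M : Matrix (Fin n) (Fin n) A) : Prop :=
  ∀ a : Fin n → A, (∑ i, a i) = 0 → 0 ≤ ∑ i, ∑ j, star (a i) * M i j * a j

/-- A matrix is a positive element of the C*-algebra `Mₙ(A)` iff it factors as `Bᴴ * B`
(the standard characterization of positive elements in a C*-algebra). -/
def Matrix.IsPosElem {A : Type*} {n : ℕ} [NonUnitalCStarAlgebra A]
    (M : Matrix (Fin n) (Fin n) A) : Prop :=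
  ∃ B : Matrix (Fin n) (Fin n) A, M = Bᴴ * B

namespace Matrix

section QuadraticForm

variable {ι κ R : Type*} [Fintype ι] [NonUnitalSemiring R] [StarRing R]

lemma star_dotProduct_mulVec_eq_sum_sum (M : Matrix ι ι R) (a : ι → R) :
    star a ⬝ᵥ (M *ᵥ a) = ∑ i, ∑ j, star (a i) * M i j * a j := by
  simp only [dotProduct, mulVec, Pi.star_apply, Finset.mul_sum, mul_assoc]

lemma star_dotProduct_conjTranspose_mul_self_mulVec [Fintype κ] (B : Matrix κ ι R) (a : ι → R) :
    star a ⬝ᵥ ((Bᴴ * B) *ᵥ a) = star (B *ᵥ a) ⬝ᵥ (B *ᵥ a) := by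
  rw [← mulVec_mulVec, dotProduct_mulVec, star_mulVec]

end QuadraticForm

section Shift

variable {ι R : Type*} [NonUnitalRing R]

def shiftAt (M : Matrix ι ι R) (m : ι) : Matrix ι ι R :=
  of fun i j => M i j - M i m - M m j + M m m

lemma shiftAt_apply (M : Matrix ι ι R) (m i j : ι) :
    M.shiftAt m i j = M i j - M i m - M m j + M m m := rfl

lemma conjTranspose_shiftAt [StarRing R] (M : Matrix ι ι R) (m : ι) :
    (M.shiftAt m)ᴴ = Mᴴ.shiftAt m := by
  ext i j
  simp only [conjTranspose_apply, shiftAt_apply, star_add, star_sub]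
  abel

variable [Fintype ι]

lemma shiftAt_mulVec_of_sum_eq_zero (M : Matrix ι ι R) (m : ι) {a : ι → R}
    (ha : ∑ i, a i = 0) : M.shiftAt m *ᵥ a = M *ᵥ a - Function.const ι ((M *ᵥ a) m) := by
  ext i
  simp only [mulVec, dotProduct, shiftAt_apply, sub_mul, add_mul, Finset.sum_add_distrib,
    Finset.sum_sub_distrib, ← Finset.mul_sum, ha, mul_zero, Pi.sub_apply, Function.const_apply]
  abel

lemma star_dotProduct_shiftAt_mulVec_of_sum_eq_zero [StarRing R] (M : Matrix ι ι R) (m : ι)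
    {a : ι → R} (ha : ∑ i, a i = 0) :
    star a ⬝ᵥ (M.shiftAt m *ᵥ a) = star a ⬝ᵥ (M *ᵥ a) := by
  have h_const : star a ⬝ᵥ Function.const ι ((M *ᵥ a) m) = 0 := by
    simp only [dotProduct, Function.const_apply, Pi.star_apply, ← Finset.sum_mul, ← star_sum,
      ha, star_zero, zero_mul]
  rw [shiftAt_mulVec_of_sum_eq_zero M m ha, dotProduct_sub, h_const, sub_zero]

lemma shiftAt_mulVec_apply_self (M : Matrix ι ι R) (m : ι) (b : ι → R) :
    (M.shiftAt m *ᵥ b) m = 0 := by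
  simp [mulVec, dotProduct, shiftAt_apply]

lemma shiftAt_mulVec_single [DecidableEq ι] (M : Matrix ι ι R) (m : ι) (x : R) :
    M.shiftAt m *ᵥ Pi.single m x = 0 := by
  ext i
  simp [mulVec_single, shiftAt_apply]

lemma star_dotProduct_shiftAt_mulVec_sub_single [DecidableEq ι] [StarRing R]
    (M : Matrix ι ι R) (m : ι) (b : ι → R) (x : R) :
    star (b - Pi.single m x) ⬝ᵥ (M.shiftAt m *ᵥ (b - Pi.single m x))
      = star b ⬝ᵥ (M.shiftAt m *ᵥ b) := by
  rw [mulVec_sub, shiftAt_mulVec_single, sub_zero, star_sub, sub_dotProduct, ← Pi.single_star,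
    single_dotProduct, shiftAt_mulVec_apply_self, mul_zero, sub_zero]

end Shift

lemma isCondPos_iff_forall_star_dotProduct_shiftAt_mulVec_nonneg {A : Type*} {n : ℕ}
    [NonUnitalCStarAlgebra A] [PartialOrder A] (M : Matrix (Fin n) (Fin n) A) (m : Fin n) :
    M.IsCondPos ↔ ∀ b, 0 ≤ star b ⬝ᵥ (M.shiftAt m *ᵥ b) := by
  classical
  simp only [IsCondPos, ← star_dotProduct_mulVec_eq_sum_sum]
  constructor
  · intro h b
    have ha : ∑ i, (b - Pi.single m (∑ j, b j) : Fin n → A) i = 0 := by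
      simp [Finset.sum_sub_distrib]
    rw [← star_dotProduct_shiftAt_mulVec_sub_single M m b (∑ j, b j),
      star_dotProduct_shiftAt_mulVec_of_sum_eq_zero M m ha]
    exact h _ ha
  · intro h a ha
    rw [← star_dotProduct_shiftAt_mulVec_of_sum_eq_zero M m ha]
    exact h a

end Matrix

lemma CStarRing.dotProduct_star_self_eq_zero {ι A : Type*} [Fintype ι] [NonUnitalNormedRing A]
    [StarRing A] [CStarRing A] [PartialOrder A] [StarOrderedRing A] {v : ι → A} :
    star v ⬝ᵥ v = 0 ↔ v = 0 := by
  refine ⟨fun h => funext fun i => ?_, fun h => by simp [h]⟩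
  have h_terms := (Fintype.sum_eq_zero_iff_of_nonneg fun i => star_mul_self_nonneg (v i)).mp h
  exact (CStarRing.star_mul_self_eq_zero_iff _).mp (congrFun h_terms i)

namespace CStarMatrix

variable {ι A : Type*} [Fintype ι] [NonUnitalCStarAlgebra A]

lemma star_mul_mul_apply_self (X Y : CStarMatrix ι ι A) (j : ι) :
    (star X * Y * X) j j = star (fun i => X i j) ⬝ᵥ (ofMatrix.symm Y *ᵥ fun i => X i j) := by
  simp only [Matrix.star_dotProduct_mulVec_eq_sum_sum, mul_apply, star_apply, Finset.sum_mul]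
  exact Finset.sum_comm

/- The `ℝ`-action on `CStarMatrix` is the entrywise one, not the restriction of its `ℂ`-action;
the two agree only after unfolding, so instance search does not find the instances that the real
continuous functional calculus needs. -/

instance {R : Type*} [Monoid R] [DistribMulAction R A] [SMulCommClass R A A] :
    SMulCommClass R (CStarMatrix ι ι A) (CStarMatrix ι ι A) :=
  inferInstanceAs (SMulCommClass R (Matrix ι ι A) (Matrix ι ι A))

instance {R : Type*} [Monoid R] [DistribMulAction R A] [IsScalarTower R A A] :
    IsScalarTower R (CStarMatrix ι ι A) (CStarMatrix ι ι A) :=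
  inferInstanceAs (IsScalarTower R (Matrix ι ι A) (Matrix ι ι A))

variable [PartialOrder A] [StarOrderedRing A]

instance : NonUnitalContinuousFunctionalCalculus ℝ (CStarMatrix ι ι A) IsSelfAdjoint :=
  IsSelfAdjoint.instNonUnitalContinuousFunctionalCalculus

instance : NonnegSpectrumClass ℝ (CStarMatrix ι ι A) :=
  CStarAlgebra.instNonnegSpectrumClass'

lemma eq_zero_of_nonneg_of_diag_nonpos {P : CStarMatrix ι ι A} (hP : 0 ≤ P)
    (hdiag : ∀ j, P j j ≤ 0) : P = 0 := by
  obtain ⟨B, rfl⟩ := CStarAlgebra.nonneg_iff_eq_star_mul_self.mp hP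
  have hcol : ∀ j, (fun i => B i j) = 0 := fun j =>
    CStarRing.dotProduct_star_self_eq_zero.mp <|
      le_antisymm (hdiag j) (dotProduct_star_self_nonneg _)
  have hB : B = 0 := ext fun i j => congrFun (hcol j) i
  rw [hB, star_zero, zero_mul]

lemma nonneg_of_forall_star_dotProduct_mulVec_nonneg {N : CStarMatrix ι ι A}
    (hN : IsSelfAdjoint N) (h : ∀ b, 0 ≤ star b ⬝ᵥ (ofMatrix.symm N *ᵥ b)) : 0 ≤ N := by
  set Q := N⁻
  have hQ : 0 ≤ Q := CFC.negPart_nonneg N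
  have hQ_star : star Q = Q := hQ.isSelfAdjoint.star_eq
  have hQNQ : Q * N * Q = -(Q * Q * Q) := by
    conv_lhs => rw [← CFC.posPart_sub_negPart N]
    rw [mul_sub, sub_mul, CFC.negPart_mul_posPart, zero_mul, zero_sub]
  have hQQQ : Q * Q * Q = 0 := by
    refine eq_zero_of_nonneg_of_diag_nonpos ?_ fun j => ?_
    · simpa only [hQ_star] using star_left_conjugate_nonneg hQ Q
    · have hj := h fun i => Q i j
      rwa [← star_mul_mul_apply_self, hQ_star, hQNQ, neg_apply, neg_nonneg] at hj
  have hQQ : Q * Q = 0 := by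
    rw [← CStarRing.star_mul_self_eq_zero_iff, star_mul, hQ_star, ← mul_assoc, hQQQ, zero_mul]
  rw [← CFC.negPart_eq_zero_iff N, ← CStarRing.star_mul_self_eq_zero_iff, hQ_star]
  exact hQQ

end CStarMatrix

namespace Matrix

variable {A : Type*} [NonUnitalCStarAlgebra A] [PartialOrder A] [StarOrderedRing A] {n : ℕ}

lemma isPosElem_iff_forall_star_dotProduct_mulVec_nonneg {M : Matrix (Fin n) (Fin n) A}
    (hM : Mᴴ = M) : M.IsPosElem ↔ ∀ b, 0 ≤ star b ⬝ᵥ (M *ᵥ b) := by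
  constructor
  · rintro ⟨B, rfl⟩ b
    rw [star_dotProduct_conjTranspose_mul_self_mulVec]
    exact dotProduct_star_self_nonneg _
  · intro h
    exact (CStarAlgebra.nonneg_iff_eq_star_mul_self (a := CStarMatrix.ofMatrix M)).mp
      (CStarMatrix.nonneg_of_forall_star_dotProduct_mulVec_nonneg hM h)

lemma isCondPos_iff_isPosElem_shiftAt {M : Matrix (Fin n) (Fin n) A} (hM : Mᴴ = M) (m : Fin n) :
    M.IsCondPos ↔ (M.shiftAt m).IsPosElem := by
  rw [isCondPos_iff_forall_star_dotProduct_shiftAt_mulVec_nonneg M m,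
    isPosElem_iff_forall_star_dotProduct_mulVec_nonneg (by rw [conjTranspose_shiftAt, hM])]

end Matrix

/-- A hermitian matrix `[aᵢⱼ] ∈ Mₙ(A)` (`n ≥ 2`) is conditionally positive iff the matrix
`[aᵢⱼ − aᵢₘ − aₘⱼ + aₘₘ]` is a positive element of `Mₙ(A)` for some index `m`. -/
theorem matrix_condPos_iff_shift_posElem {A : Type*} {n : ℕ} (hn : 2 ≤ n)
    [NonUnitalCStarAlgebra A] [PartialOrder A] [StarOrderedRing A]
    (M : Matrix (Fin n) (Fin n) A) (hM : Mᴴ = M) :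
    M.IsCondPos ↔
      ∃ m : Fin n, Matrix.IsPosElem (Matrix.of fun i j => M i j - M i m - M m j + M m m) := by
  constructor
  · intro h
    exact ⟨⟨0, by omega⟩, (M.isCondPos_iff_isPosElem_shiftAt hM _).mp h⟩
  · rintro ⟨m, hm⟩
    exact (M.isCondPos_iff_isPosElem_shiftAt hM m).mpr hm
end

section
/- Let Φ : A → B be a linear map between C*-algebras. Then Φ is positive (i.e. Φ(a) ≥ 0 whenever a ≥ 0) if and only if the induced entrywise map Φ₂ : M₂(A) → M₂(B), Φ₂([a_{ij}]) = [Φ(a_{ij})], maps every conditionally positive hermitian matrix in M₂(A) to a conditionally positive hermitian matrix in M₂(B). -/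
open Matrix

section Aux

variable {B : Type*} [NonUnitalCStarAlgebra B]

lemma aux_cube_eq_zero {c : B} (hc : _root_.IsSelfAdjoint c) (h : c * c * c = 0) : c = 0 := by
  have hsq : c * c = 0 := by
    have h4 : star (c * c) * (c * c) = 0 := by
      rw [StarMul.star_mul, hc.star_eq, mul_assoc, ← mul_assoc c c c, h, mul_zero]
    have hn := CStarRing.norm_star_mul_self (x := c * c)
    rw [h4, norm_zero] at hn
    exact norm_eq_zero.mp (mul_self_eq_zero.mp hn.symm)
  have h0 : star c * c = 0 := by rw [hc.star_eq, hsq]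
  have hn := CStarRing.norm_star_mul_self (x := c)
  rw [h0, norm_zero] at hn
  exact norm_eq_zero.mp (mul_self_eq_zero.mp hn.symm)

variable [PartialOrder B] [StarOrderedRing B]

lemma aux_nonneg_of_conj {x : B} (hx : _root_.IsSelfAdjoint x)
    (h : ∀ b : B, 0 ≤ star b * x * b) : 0 ≤ x := by
  have hneg : (0 : B) ≤ x⁻ := CFC.negPart_nonneg x
  have hsa : star (x⁻) = x⁻ := hneg.isSelfAdjoint.star_eq
  have key : star (x⁻) * x * x⁻ = -(x⁻ * x⁻ * x⁻) := by
    rw [hsa]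
    nth_rewrite 2 [← CFC.posPart_sub_negPart x hx]
    simp [mul_sub, sub_mul, CFC.negPart_mul_posPart]
  have h1 : 0 ≤ -(x⁻ * x⁻ * x⁻) := key ▸ h (x⁻)
  have h2 : 0 ≤ x⁻ * x⁻ * x⁻ := by
    have := star_left_conjugate_nonneg hneg (x⁻)
    rwa [hsa] at this
  have h3 : x⁻ * x⁻ * x⁻ = 0 := le_antisymm (neg_nonneg.mp h1) h2
  have hz : x⁻ = 0 := aux_cube_eq_zero hneg.isSelfAdjoint h3
  have hps := CFC.posPart_sub_negPart x hx
  rw [hz, sub_zero] at hps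
  rw [← hps]
  exact CFC.posPart_nonneg x

end Aux

section Star

variable {A B : Type*}
    [NonUnitalCStarAlgebra A] [PartialOrder A] [StarOrderedRing A]
    [NonUnitalCStarAlgebra B] [PartialOrder B] [StarOrderedRing B]

lemma aux_map_star (Φ : A →ₗ[ℂ] B) (h : ∀ a : A, 0 ≤ a → 0 ≤ Φ a) (a : A) :
    Φ (star a) = star (Φ a) := by
  have hself : ∀ x : A, _root_.IsSelfAdjoint x → _root_.IsSelfAdjoint (Φ x) := by
    intro x hx
    rw [← CFC.posPart_sub_negPart x hx, map_sub]
    exact ((h _ (CFC.posPart_nonneg x)).isSelfAdjoint).sub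
      ((h _ (CFC.negPart_nonneg x)).isSelfAdjoint)
  have hu : _root_.IsSelfAdjoint (a + star a) := IsSelfAdjoint.add_star_self a
  have hv : _root_.IsSelfAdjoint (Complex.I • a - Complex.I • star a) := by
    rw [_root_.IsSelfAdjoint, star_sub, star_smul, star_smul, star_star,
      Complex.star_def, Complex.conj_I, neg_smul, neg_smul, sub_neg_eq_add]
    abel
  have hA := (hself _ hu).star_eq
  have hB := (hself _ hv).star_eq
  have hc : (Complex.I / 2) * Complex.I = -(1/2 : ℂ) := by
    rw [div_mul_eq_mul_div, Complex.I_mul_I]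
    norm_num
  have e1 : Φ (star a) = (1/2 : ℂ) • Φ (a + star a) +
      (Complex.I/2 : ℂ) • Φ (Complex.I • a - Complex.I • star a) := by
    rw [← Φ.map_smul, ← Φ.map_smul, ← map_add]
    congr 1
    rw [smul_sub, smul_smul, smul_smul, hc]
    module
  have e2 : Φ a = (1/2 : ℂ) • Φ (a + star a) -
      (Complex.I/2 : ℂ) • Φ (Complex.I • a - Complex.I • star a) := by
    rw [← Φ.map_smul, ← Φ.map_smul, ← map_sub]
    congr 1
    rw [smul_sub, smul_smul, smul_smul, hc]
    module
  have c1 : star (1/2 : ℂ) = (1/2 : ℂ) := by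
    rw [star_div₀, star_one]
    norm_num
  have c2 : star (Complex.I/2 : ℂ) = -(Complex.I/2 : ℂ) := by
    rw [Complex.star_def, map_div₀, Complex.conj_I, map_ofNat, neg_div]
  rw [e1, e2, star_sub, star_smul, star_smul, hA, hB, c1, c2, neg_smul, sub_neg_eq_add]

end Star

/-- A linear map `Φ : A → B` between C*-algebras is positive if and only if the induced
entrywise map `Φ₂ : M₂(A) → M₂(B)` maps every conditionally positive hermitian matrix to a
conditionally positive hermitian matrix. -/
theorem positive_iff_map_two_preserves_condPos {A B : Type*}
    [NonUnitalCStarAlgebra A] [PartialOrder A] [StarOrderedRing A]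
    [NonUnitalCStarAlgebra B] [PartialOrder B] [StarOrderedRing B]
    (Φ : A →ₗ[ℂ] B) :
    (∀ a : A, 0 ≤ a → 0 ≤ Φ a) ↔
      ∀ M : Matrix (Fin 2) (Fin 2) A, Mᴴ = M → M.IsCondPos →
        (M.map Φ)ᴴ = M.map Φ ∧ (M.map Φ).IsCondPos := by
  constructor
  · intro h M hM hMc
    have hstar := aux_map_star Φ h
    have hent : ∀ i j, star (M j i) = M i j := by
      intro i j
      have := congrFun (congrFun hM i) j
      simpa [conjTranspose_apply] using this
    constructor
    · ext i j
      simp only [conjTranspose_apply, Matrix.map_apply, ← hstar, hent]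
    · intro b hb
      rw [Fin.sum_univ_two] at hb
      have hb1 : b 1 = -b 0 := by
        rw [add_comm] at hb
        exact eq_neg_of_add_eq_zero_left hb
      set X : A := M 0 0 - M 0 1 - M 1 0 + M 1 1 with hXdef
      have hXsa : _root_.IsSelfAdjoint X := by
        rw [_root_.IsSelfAdjoint, hXdef, star_add, star_sub, star_sub,
          hent 0 0, hent 0 1, hent 1 0, hent 1 1]
        abel
      have hX : 0 ≤ X := by
        apply aux_nonneg_of_conj hXsa
        intro c
        have h0 := hMc ![c, -c] (by simp [Fin.sum_univ_two])
        have hEq : ∑ i, ∑ j, star ((![c, -c] : Fin 2 → A) i) * M i j *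
            (![c, -c] : Fin 2 → A) j = star c * X * c := by
          rw [hXdef]
          simp only [Fin.sum_univ_two, Matrix.cons_val_zero, Matrix.cons_val_one,
            Matrix.head_cons, star_neg, neg_mul, mul_neg, neg_neg,
            mul_sub, sub_mul, mul_add, add_mul]
          abel
        rwa [hEq] at h0
      have hconj := star_left_conjugate_nonneg (h X hX) (b 0)
      have hEq : ∑ i, ∑ j, star (b i) * (M.map Φ) i j * b j
          = star (b 0) * Φ X * b 0 := by
        rw [hXdef, map_add, map_sub, map_sub]
        simp only [Fin.sum_univ_two, Matrix.map_apply, hb1, star_neg, neg_mul,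
          mul_neg, neg_neg, mul_sub, sub_mul, mul_add, add_mul]
        abel
      rwa [hEq]
  · intro h a ha
    set M : Matrix (Fin 2) (Fin 2) A := !![a, 0; 0, 0] with hMdef
    have hM : Mᴴ = M := by
      ext i j
      fin_cases i <;> fin_cases j <;>
        simp [hMdef, ha.isSelfAdjoint.star_eq]
    have hMc : M.IsCondPos := by
      intro c _
      have hEq : ∑ i, ∑ j, star (c i) * M i j * c j = star (c 0) * a * c 0 := by
        simp [Fin.sum_univ_two, hMdef]
      rw [hEq]
      exact star_left_conjugate_nonneg ha (c 0)
    obtain ⟨h1, h2⟩ := h M hM hMc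
    have hsa : _root_.IsSelfAdjoint (Φ a) := by
      have := congrFun (congrFun h1 0) 0
      simpa [hMdef, _root_.IsSelfAdjoint] using this
    apply aux_nonneg_of_conj hsa
    intro b
    have hcp := h2 ![b, -b] (by simp [Fin.sum_univ_two])
    have hEq : ∑ i, ∑ j, star ((![b, -b] : Fin 2 → B) i) * (M.map Φ) i j *
        (![b, -b] : Fin 2 → B) j = star b * Φ a * b := by
      simp [Fin.sum_univ_two, hMdef]
    rwa [hEq] at hcp
end

section
/- Let S be a nonempty set, A a C*-algebra, and L : S × S → A a positive definite kernel. Then the Cauchy–Schwarz inequality L(s,t) L(t,s) ≤ ‖L(t,t)‖ · L(s,s) holds for all s,t ∈ S, where ‖·‖ is the C*-norm of A and the right-hand side is the real scalar multiple of L(s,s). -/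
/-! Write `c = L(t,s)`, so that `L(s,t) = c⋆`. Positivity of the kernel at the points `s, t` with
coefficients `r a` and `-c a`, together with `c⋆ L(t,t) c ≤ ‖L(t,t)‖ c⋆c`, shows that
`a⋆ (r L(s,s) - c⋆c) a ≥ 0` for all `a` and all `r ≥ ‖L(t,t)‖`, `r > 0`. In a C⋆-algebra a
selfadjoint element all of whose conjugates are positive is positive, so `c⋆c ≤ r L(s,s)`;
letting `r` decrease to `‖L(t,t)‖` gives the inequality. -/

section CStarAlgebra

variable {A : Type*} [NonUnitalCStarAlgebra A] [PartialOrder A] [StarOrderedRing A]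

lemma nonneg_of_forall_star_mul_mul_nonneg {x : A} (hx : IsSelfAdjoint x)
    (h : ∀ a : A, 0 ≤ star a * x * a) : 0 ≤ x := by
  rw [← CFC.negPart_eq_zero_iff x hx]
  set z := x⁻
  have hz : 0 ≤ z := CFC.negPart_nonneg x
  have hz_star : star z = z := (IsSelfAdjoint.of_nonneg hz).star_eq
  -- `x⁻ x⁺ = 0`, so conjugating `x = x⁺ - x⁻` by `z = x⁻` leaves `-z³`.
  have hzxz : z * x * z = -(z * z * z) := by
    conv_lhs => rw [← CFC.posPart_sub_negPart x hx]
    rw [mul_sub, sub_mul, CFC.negPart_mul_posPart, zero_mul, zero_sub]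
  have hcube : z * z * z = 0 := by
    refine le_antisymm ?_ (by simpa [hz_star] using star_left_conjugate_nonneg hz z)
    simpa [hz_star, hzxz] using h z
  have hsq : z * z = 0 := by
    rw [← CStarRing.star_mul_self_eq_zero_iff, star_mul, hz_star, mul_assoc, ← mul_assoc z z z,
      hcube, mul_zero]
  rwa [← CStarRing.star_mul_self_eq_zero_iff, hz_star]

lemma star_mul_self_le_smul_of_forall_quadratic_nonneg {P T c : A} (hP : IsSelfAdjoint P)
    (hT : IsSelfAdjoint T)
    (h : ∀ a b : A, 0 ≤ star a * P * a + star a * star c * b + (star b * c * a + star b * T * b))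
    {r : ℝ} (hr : 0 < r) (hTr : ‖T‖ ≤ r) : star c * c ≤ r • P := by
  have hself : IsSelfAdjoint (r • P - star c * c) :=
    ((IsSelfAdjoint.all r).smul hP).sub (IsSelfAdjoint.star_mul_self c)
  refine sub_nonneg.mp (nonneg_of_forall_star_mul_mul_nonneg hself fun a => ?_)
  set q := star a * (star c * c) * a
  set u := star a * (star c * T * c) * a
  set w := star a * P * a
  have hq : 0 ≤ q := star_left_conjugate_nonneg (star_mul_self_nonneg c) a
  have hu : u ≤ r • q := calc
    u ≤ star a * (‖T‖ • (star c * c)) * a :=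
      star_left_conjugate_le_conjugate (CStarAlgebra.star_left_conjugate_le_norm_smul hT) a
    _ = ‖T‖ • q := by simp only [q, mul_smul_comm, smul_mul_assoc]
    _ ≤ r • q := smul_le_smul_of_nonneg_right hTr hq
  have hpair : 0 ≤ (r * r) • w - (2 * r) • q + u := by
    convert h (r • a) (-(c * a)) using 1
    simp only [w, q, u, star_smul, star_neg, star_mul, star_trivial, smul_mul_assoc,
      mul_smul_comm, smul_smul, mul_assoc, mul_neg, neg_mul, neg_neg]
    module
  have hscaled : 0 ≤ r • (r • w - q) := calc
    0 ≤ (r * r) • w - (2 * r) • q + u := hpair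
    _ ≤ (r * r) • w - (2 * r) • q + r • q := by gcongr
    _ = r • (r • w - q) := by module
  have hexpand : star a * (r • P - star c * c) * a = r • w - q := by
    simp only [w, q, mul_sub, sub_mul, mul_smul_comm, smul_mul_assoc]
  rw [hexpand]
  exact nonneg_of_smul_nonneg_of_pos_left hscaled hr

end CStarAlgebra

lemma le_smul_of_forall_gt_le_smul {M : Type*} [AddCommMonoid M] [Module ℝ M]
    [TopologicalSpace M] [ContinuousSMul ℝ M] [Preorder M] [ClosedIciTopology M]
    {x y : M} {r₀ : ℝ} (h : ∀ r > r₀, x ≤ r • y) : x ≤ r₀ • y :=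
  ge_of_tendsto ((continuous_id.smul continuous_const).tendsto r₀ |>.mono_left
    nhdsWithin_le_nhds) (eventually_nhdsWithin_of_forall (s := Set.Ioi r₀) h)

lemma IsPosDefKernel.nonneg_pair {S A : Type*} [NonUnitalCStarAlgebra A] [PartialOrder A]
    {L : S → S → A} (hL : IsPosDefKernel L) (s t : S) (a b : A) :
    0 ≤ star a * L s s * a + star a * L s t * b + (star b * L t s * a + star b * L t t * b) := by
  simpa [Fin.sum_univ_two] using hL 2 ![s, t] ![a, b]

theorem posDefKernel_cauchy_schwarz_general {S A : Type*}
    [NonUnitalCStarAlgebra A] [PartialOrder A] [StarOrderedRing A]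
    (L : S → S → A) (hL : IsHermitianKernel L) (hLpd : IsPosDefKernel L) :
    ∀ s t, L s t * L t s ≤ ‖L t t‖ • L s s := by
  intro s t
  rw [hL t s]
  refine le_smul_of_forall_gt_le_smul fun r hr => ?_
  refine star_mul_self_le_smul_of_forall_quadratic_nonneg (hL s s).symm (hL t t).symm
    (fun a b => ?_) ((norm_nonneg _).trans_lt hr) hr.le
  simpa only [← hL t s] using hLpd.nonneg_pair s t a b

/-- Cauchy–Schwarz inequality for positive definite kernels with values in a C*-algebra:
`L(s,t) L(t,s) ≤ ‖L(t,t)‖ • L(s,s)`. -/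
theorem posDefKernel_cauchy_schwarz {S A : Type*} [Nonempty S]
    [NonUnitalCStarAlgebra A] [PartialOrder A] [StarOrderedRing A]
    (L : S → S → A) (hL : IsHermitianKernel L) (hLpd : IsPosDefKernel L) :
    ∀ s t, L s t * L t s ≤ ‖L t t‖ • L s s :=
  posDefKernel_cauchy_schwarz_general L hL hLpd
end

section
/- Let S be a nonempty set and A a commutative C*-algebra. If K₁, K₂ : S × S → A are positive definite kernels, then their pointwise product (K₁ ∘ K₂)(s,t) := K₁(s,t) K₂(s,t) is again a positive definite kernel. -/
/-!
A character `ψ` of `A` turns a positive definite kernel `K` into the positive definite scalar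
kernel `ψ ∘ K` (test `K` against the coefficients `zᵢ • b` with `ψ b = 1`), and by Gelfand duality
for the unitization an element of `A` is positive as soon as all characters are nonnegative on it.
So the theorem reduces to the Schur product theorem for complex positive semidefinite matrices.
-/

open scoped ComplexOrder
open Matrix

theorem Matrix.posSemidef_of_forall_dotProduct_mulVec_nonneg {n : Type*} [Fintype n]
    {M : Matrix n n ℂ} (hM : ∀ x : n → ℂ, 0 ≤ star x ⬝ᵥ (M *ᵥ x)) : M.PosSemidef := by
  classical
  -- by polarization, a complex matrix whose quadratic form is real-valued is hermitian
  rw [← isPositive_toEuclideanLin_iff, LinearMap.isPositive_iff_complex]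
  intro x
  have hx := hM x.ofLp
  have hconj : x.ofLp ⬝ᵥ star (M *ᵥ x.ofLp) = star x.ofLp ⬝ᵥ (M *ᵥ x.ofLp) := by
    rw [dotProduct_star, dotProduct_comm, (IsSelfAdjoint.of_nonneg hx).star_eq]
  simp only [EuclideanSpace.inner_eq_star_dotProduct, ofLp_toLpLin, toLin'_apply, hconj,
    RCLike.re_to_complex]
  obtain ⟨hre, him⟩ := Complex.nonneg_iff.mp hx
  exact ⟨Complex.ext rfl (by simp [him]), hre⟩

theorem isPosDefKernel_iff_forall_posSemidef {S : Type*} (L : S → S → ℂ) :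
    IsPosDefKernel L ↔ ∀ n (s : Fin n → S), (of fun i j ↦ L (s i) (s j)).PosSemidef := by
  have hquad : ∀ n (s : Fin n → S) (a : Fin n → ℂ),
      ∑ i, ∑ j, star (a i) * L (s i) (s j) * a j
        = star a ⬝ᵥ (of (fun i j ↦ L (s i) (s j)) *ᵥ a) := by
    intro n s a
    simp only [dotProduct, mulVec, of_apply, Pi.star_apply, Finset.mul_sum, mul_assoc]
  simp only [IsPosDefKernel, hquad]
  exact ⟨fun h n s ↦ posSemidef_of_forall_dotProduct_mulVec_nonneg (h n s),
    fun h n s ↦ (h n s).dotProduct_mulVec_nonneg⟩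

theorem IsPosDefKernel.mul_complex {S : Type*} {K₁ K₂ : S → S → ℂ} (h₁ : IsPosDefKernel K₁)
    (h₂ : IsPosDefKernel K₂) : IsPosDefKernel fun s t ↦ K₁ s t * K₂ s t := by
  rw [isPosDefKernel_iff_forall_posSemidef] at *
  exact fun n s ↦ (h₁ n s).hadamard (h₂ n s)

theorem IsPosDefKernel.map {S A : Type*} [NonUnitalCStarAlgebra A] [PartialOrder A]
    [StarOrderedRing A] {K : S → S → A} (hK : IsPosDefKernel K) (ψ : A →⋆ₙₐ[ℂ] ℂ) :
    IsPosDefKernel fun s t ↦ ψ (K s t) := by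
  intro n s z
  by_cases hψ : ψ = 0
  · simp [hψ]
  obtain ⟨b, hb⟩ : ∃ b, ψ b = 1 := by
    obtain ⟨b, hb⟩ := DFunLike.ne_iff.mp hψ
    exact ⟨(ψ b)⁻¹ • b, by simp_all⟩
  have := map_nonneg ψ (hK n s fun i ↦ z i • b)
  simpa [map_sum, map_mul, map_smul, map_star, hb, mul_assoc, mul_left_comm] using this

theorem nonneg_of_forall_starAlgHom_nonneg {A : Type*} [NonUnitalCommCStarAlgebra A]
    [PartialOrder A] [StarOrderedRing A] {x : A} (h : ∀ ψ : A →⋆ₙₐ[ℂ] ℂ, 0 ≤ ψ x) : 0 ≤ x := by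
  let Γ := gelfandStarTransform (Unitization ℂ A)
  have hΓ : 0 ≤ Γ x := fun φ ↦
    h (((φ : Unitization ℂ A →⋆ₐ[ℂ] ℂ) : Unitization ℂ A →⋆ₙₐ[ℂ] ℂ).comp
      (Unitization.inrNonUnitalStarAlgHom ℂ A))
  rw [← Unitization.inr_nonneg_iff]
  simpa using map_nonneg Γ.symm hΓ

theorem posDefKernel_mul_general {S A : Type*}
    [NonUnitalCommCStarAlgebra A] [PartialOrder A] [StarOrderedRing A]
    (K₁ K₂ : S → S → A)
    (hK₁pd : IsPosDefKernel K₁) (hK₂pd : IsPosDefKernel K₂) :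
    IsPosDefKernel (fun s t => K₁ s t * K₂ s t) := by
  intro n s a
  refine nonneg_of_forall_starAlgHom_nonneg fun ψ ↦ ?_
  simpa [map_sum, map_mul, map_star, mul_assoc] using
    (hK₁pd.map ψ).mul_complex (hK₂pd.map ψ) n s (ψ ∘ a)

/-- The pointwise (Schur) product of two positive definite kernels with values in a
commutative C*-algebra is again positive definite. -/
theorem posDefKernel_mul {S A : Type*} [Nonempty S]
    [NonUnitalCommCStarAlgebra A] [PartialOrder A] [StarOrderedRing A]
    (K₁ K₂ : S → S → A) (hK₁ : IsHermitianKernel K₁) (hK₂ : IsHermitianKernel K₂)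
    (hK₁pd : IsPosDefKernel K₁) (hK₂pd : IsPosDefKernel K₂) :
    IsPosDefKernel (fun s t => K₁ s t * K₂ s t) :=
  posDefKernel_mul_general K₁ K₂ hK₁pd hK₂pd
end

section
/- Let S be a nonempty set and K : S × S → ℂ a conditionally positive definite kernel. Then there exist a complex Hilbert space F, a map V : S → F and a map h : S → ℂ such that K(s,t) = 2⟨V(s), V(t)⟩ − ⟨V(s), V(s)⟩ − ⟨V(t), V(t)⟩ − h(s) − conj(h(t)) for all s,t ∈ S (Kolmogorov-type decomposition, scalar case). -/
open scoped ComplexOrder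
open Complex

/-- A scalar kernel `K` is conditionally positive definite if it is hermitian and for every
`n ≥ 2`, all `s₁, …, sₙ ∈ S` and all `c₁, …, cₙ ∈ ℂ` with `∑ᵢ cᵢ = 0`, the number
`∑ᵢⱼ conj(cᵢ) cⱼ K(sᵢ, sⱼ)` is real and nonnegative (here expressed via the order on `ℂ`). -/
def IsCondPosDefKernelC {S : Type*} (K : S → S → ℂ) : Prop :=
  ∀ (n : ℕ), 2 ≤ n → ∀ (s : Fin n → S) (c : Fin n → ℂ), (∑ i, c i) = 0 →
    0 ≤ ∑ i, ∑ j, (starRingEnd ℂ) (c i) * c j * K (s i) (s j)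

/-!
Fix `s₀ ∈ S`. The map `c ↦ (-∑ᵢ cᵢ, c)` sends every coefficient vector on points `sᵢ` to a
vector of total sum zero on the points `s₀, sᵢ`, so conditional positive definiteness of `K`
makes the kernel `(K(s,t) - K(s,s₀) - K(s₀,t) + K(s₀,s₀)) / 2` positive semidefinite. Its
Kolmogorov decomposition `⟨V s, V t⟩` (the reproducing kernel Hilbert space of Moore's theorem)
then recovers `K` up to the terms `h s + conj (h t)`.
-/

universe u v

open Matrix

theorem Matrix.posSemidef_iff_forall_finset_submatrix {n R : Type*} [CommRing R]
    [PartialOrder R] [StarRing R] {M : Matrix n n R} :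
    M.PosSemidef ↔ ∀ T : Finset n, (M.submatrix ((↑) : T → n) (↑)).PosSemidef := by
  classical
  refine ⟨fun hM T => hM.submatrix _, fun h => ⟨?_, fun x => ?_⟩⟩
  · ext i j
    simpa using (h {i, j}).isHermitian.apply ⟨i, by simp⟩ ⟨j, by simp⟩
  · have hx : ∀ i ∈ x.support, i ∈ x.support := fun _ => id
    have key := (h x.support).2 (x.subtypeDomain (· ∈ x.support))
    simp only [submatrix_apply] at key
    rw [Finsupp.sum_subtypeDomain_index (h := fun i xi => (x.subtypeDomain (· ∈ x.support)).sum
      fun j xj => star xi * M i j * xj) hx] at key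
    exact key.trans_eq (Finsupp.sum_congr fun i _ =>
      Finsupp.sum_subtypeDomain_index (h := fun j xj => star (x i) * M i j * xj) hx)

theorem Matrix.PosSemidef.exists_inner_eq {𝕜 : Type v} {X : Type u} [RCLike 𝕜]
    {A : Matrix X X 𝕜} (hA : A.PosSemidef) :
    ∃ (F : Type (max u v)) (_ : NormedAddCommGroup F) (_ : InnerProductSpace 𝕜 F)
      (_ : CompleteSpace F) (V : X → F), ∀ x y, inner 𝕜 (V x) (V y) = A x y := by
  -- Moore's theorem `RKHS.OfKernel` is stated for kernels valued in operators on `𝕜`.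
  let K : Matrix X X (𝕜 →L[𝕜] 𝕜) := A.map (algebraMap 𝕜 _)
  have hK : K.PosSemidef := by
    have h := (RKHS.posSemidef_tfae (K := K)).out 0 2
    refine h.mpr ⟨hA.isHermitian.map _ algebraMap_star_comm, fun v => ?_⟩
    refine (RCLike.nonneg_iff.mp ?_).1
    convert hA.2 v using 1
    refine Finsupp.sum_congr fun x _ => Finsupp.sum_congr fun y _ => ?_
    simp only [K, map_apply, Algebra.algebraMap_eq_smul_one, _root_.smul_apply, one_apply_eq_self,
      smul_eq_mul, RCLike.inner_apply, map_mul, RCLike.star_def, ← hA.isHermitian.apply x y]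
    ring
  have : Fact K.PosSemidef := ⟨hK⟩
  refine ⟨RKHS.OfKernel K, inferInstance, inferInstance, inferInstance,
    fun x => RKHS.kerFun (RKHS.OfKernel K) x 1, fun x y => ?_⟩
  simpa [RKHS.kerFun_apply, K] using hA.isHermitian.apply x y

def negSumExtend (ι R : Type*) [DecidableEq ι] [Ring R] : Matrix (Option ι) ι R :=
  of fun o j => o.elim (-1) fun i => if i = j then 1 else 0

theorem sum_negSumExtend_mulVec {ι R : Type*} [Fintype ι] [DecidableEq ι] [Ring R]
    (c : ι → R) : ∑ o, (negSumExtend ι R *ᵥ c) o = 0 := by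
  simp [negSumExtend, mulVec, dotProduct, Fintype.sum_option]

section Kernel

variable {S : Type*}

noncomputable def kernelCenteredAt (K : S → S → ℂ) (s₀ : S) : Matrix S S ℂ :=
  of fun s t => (K s t - K s s₀ - K s₀ t + K s₀ s₀) / 2

theorem submatrix_kernelCenteredAt {ι : Type*} [Fintype ι] [DecidableEq ι] (K : S → S → ℂ)
    (s₀ : S) (s : ι → S) :
    (kernelCenteredAt K s₀).submatrix s s = (2⁻¹ : ℂ) •
      ((negSumExtend ι ℂ)ᴴ * (of K).submatrix (Option.elim' s₀ s) (Option.elim' s₀ s) *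
        negSumExtend ι ℂ) := by
  ext i j
  simp only [kernelCenteredAt, negSumExtend, submatrix_apply, of_apply, Matrix.smul_apply,
    mul_apply, conjTranspose_apply, RCLike.star_def, Fintype.sum_option, Option.elim_none,
    Option.elim_some, Option.elim'_none, Option.elim'_some, map_neg, map_one,
    MonoidWithZeroHom.map_ite_one_zero, ite_mul, mul_ite, Finset.sum_ite_eq', Finset.mem_univ,
    ↓reduceIte, neg_mul, mul_neg, one_mul, mul_one, zero_mul, mul_zero, neg_add_rev, neg_neg,
    smul_eq_mul]
  ring

variable {K : S → S → ℂ}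

theorem IsCondPosDefKernelC.nonneg (hK : IsCondPosDefKernelC K) {n : ℕ} (s : Fin n → S)
    (c : Fin n → ℂ) (hc : ∑ i, c i = 0) :
    0 ≤ ∑ i, ∑ j, (starRingEnd ℂ) (c i) * c j * K (s i) (s j) := by
  rcases lt_or_ge n 2 with hn | hn
  · interval_cases n
    · simp
    · simp_all
  · exact hK n hn s c hc

theorem IsCondPosDefKernelC.dotProduct_mulVec_nonneg (hK : IsCondPosDefKernelC K) {ι : Type*}
    [Fintype ι] (s : ι → S) (c : ι → ℂ) (hc : ∑ i, c i = 0) :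
    0 ≤ star c ⬝ᵥ ((of K).submatrix s s *ᵥ c) := by
  let e := (Fintype.equivFin ι).symm
  refine (hK.nonneg (s ∘ e) (c ∘ e) ((e.sum_comp c).trans hc)).trans_eq
    (Fintype.sum_equiv e _ _ fun i => ?_)
  simp only [Pi.star_apply, mulVec, dotProduct, Finset.mul_sum, submatrix_apply, of_apply]
  exact Fintype.sum_equiv e _ _ fun j => by simp only [Function.comp_apply, RCLike.star_def]; ring

theorem IsCondPosDefKernelC.posSemidef_kernelCenteredAt
    (hK : ∀ s t, K t s = starRingEnd ℂ (K s t)) (hKcpd : IsCondPosDefKernelC K) (s₀ : S) :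
    (kernelCenteredAt K s₀).PosSemidef := by
  classical
  have hKherm : (of K).IsHermitian := by
    ext s t
    exact (hK t s).symm
  refine posSemidef_iff_forall_finset_submatrix.mpr fun T => ?_
  rw [submatrix_kernelCenteredAt]
  refine PosSemidef.smul ?_ (by norm_num [Complex.le_def])
  refine .of_dotProduct_mulVec_nonneg (isHermitian_conjTranspose_mul_mul _ (hKherm.submatrix _))
    fun c => ?_
  simpa only [star_mulVec, dotProduct_mulVec, vecMul_vecMul] using
    hKcpd.dotProduct_mulVec_nonneg _ _ (sum_negSumExtend_mulVec c)

end Kernel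

/-- Kolmogorov-type decomposition for scalar conditionally positive definite kernels:
`K(s,t) = 2⟨V(s), V(t)⟩ − ⟨V(s), V(s)⟩ − ⟨V(t), V(t)⟩ − h(s) − conj(h(t))` for a map `V`
into some complex Hilbert space `F` and some `h : S → ℂ`. -/
theorem condPosDef_kolmogorov_decomposition {S : Type u} [Nonempty S] (K : S → S → ℂ)
    (hK : ∀ s t, K t s = (starRingEnd ℂ) (K s t)) (hKcpd : IsCondPosDefKernelC K) :
    ∃ (F : Type u) (_ : NormedAddCommGroup F) (_ : InnerProductSpace ℂ F)
      (_ : CompleteSpace F) (V : S → F) (h : S → ℂ),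
      ∀ s t, K s t = 2 * (inner ℂ (V s) (V t) : ℂ) - (inner ℂ (V s) (V s) : ℂ)
        - (inner ℂ (V t) (V t) : ℂ) - h s - (starRingEnd ℂ) (h t) := by
  obtain ⟨s₀⟩ := ‹Nonempty S›
  obtain ⟨F, _, _, _, V, hV⟩ := (hKcpd.posSemidef_kernelCenteredAt hK s₀).exists_inner_eq
  refine ⟨F, inferInstance, inferInstance, inferInstance, V,
    fun s => K s₀ s₀ / 2 - K s s₀ - kernelCenteredAt K s₀ s s, fun s t => ?_⟩
  simp only [hV, kernelCenteredAt, of_apply, map_sub, map_div₀, map_add, ← hK, map_ofNat]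
  ring
end

section
/- Let (S, d) be a metric space. Then there exist a real Hilbert space H and an isometric map V : S → H (i.e. ‖V(s) − V(t)‖ = d(s,t) for all s,t ∈ S) if and only if the kernel K(s,t) := −d(s,t)² is conditionally positive definite, i.e. for every n ≥ 2, all s₁,…,sₙ ∈ S and all c₁,…,cₙ ∈ ℝ with ∑_{i=1}^n cᵢ = 0 one has −∑_{i,j=1}^n cᵢ cⱼ d(sᵢ,sⱼ)² ≥ 0. -/
/-!
Fix a base point `o`. If `K = -d²` is conditionally positive definite, then the kernel
`(d(x,o)² + d(y,o)² - d(x,y)²) / 2` is positive semidefinite: a finite family with coefficients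
`cᵢ` is turned into one of total weight zero by adding `o` with coefficient `-∑ cᵢ`. Moore's
theorem realises this kernel as the Gram kernel of vectors `φ x` in a Hilbert space, and then
`‖φ x - φ y‖² = d(x,y)²`. Conversely, for points of a Hilbert space and weights summing to zero,
`∑ᵢⱼ cᵢ cⱼ ‖vᵢ - vⱼ‖² = -2 ‖∑ᵢ cᵢ vᵢ‖²`.
-/

open Finset Matrix
open scoped InnerProductSpace

universe u

section

variable {S : Type*}

def IsCondPosDef (K : S → S → ℝ) : Prop :=
  ∀ n, 2 ≤ n → ∀ (s : Fin n → S) (c : Fin n → ℝ), ∑ i, c i = 0 →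
    0 ≤ ∑ i, ∑ j, c i * c j * K (s i) (s j)

theorem isCondPosDef_neg_iff {K : S → S → ℝ} :
    IsCondPosDef (fun x y => -K x y) ↔ ∀ n, 2 ≤ n → ∀ (s : Fin n → S) (c : Fin n → ℝ),
      ∑ i, c i = 0 → 0 ≤ -∑ i, ∑ j, c i * c j * K (s i) (s j) := by
  simp only [IsCondPosDef, mul_neg, sum_neg_distrib]

theorem sum_sum_mul_norm_sub_sq {E ι : Type*} [SeminormedAddCommGroup E] [InnerProductSpace ℝ E]
    [Fintype ι] (v : ι → E) {c : ι → ℝ} (hc : ∑ i, c i = 0) :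
    ∑ i, ∑ j, c i * c j * ‖v i - v j‖ ^ 2 = -2 * ‖∑ i, c i • v i‖ ^ 2 := by
  have hgram : ‖∑ i, c i • v i‖ ^ 2 = ∑ i, c i * ∑ j, c j * ⟪v i, v j⟫_ℝ := by
    rw [← real_inner_self_eq_norm_sq, sum_inner]
    simp only [inner_sum, real_inner_smul_left, real_inner_smul_right, mul_sum]
    exact sum_congr rfl fun i _ => sum_congr rfl fun j _ => mul_left_comm _ _ _
  simp only [hgram, norm_sub_sq_real, mul_add, mul_sub, sum_add_distrib, sum_sub_distrib]
  simp only [mul_assoc, mul_left_comm _ (2 : ℝ), ← mul_sum, ← sum_mul, hc, zero_mul, mul_zero,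
    sum_const_zero]
  ring

theorem isCondPosDef_neg_norm_sub_sq {E : Type*} [SeminormedAddCommGroup E]
    [InnerProductSpace ℝ E] (v : S → E) : IsCondPosDef fun x y => -‖v x - v y‖ ^ 2 := by
  refine isCondPosDef_neg_iff.mpr fun n _ s c hc => ?_
  rw [sum_sum_mul_norm_sub_sq (fun i => v (s i)) hc, neg_mul, neg_neg]
  positivity

noncomputable def centeredKernel (K : S → S → ℝ) (o x y : S) : ℝ :=
  (K x y - K x o - K o y + K o o) / 2

theorem sum_sum_centeredKernel (K : S → S → ℝ) (o : S) {n : ℕ} (s : Fin n → S) (c : Fin n → ℝ) :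
    ∑ i, ∑ j, c i * c j * centeredKernel K o (s i) (s j) =
      (∑ i, ∑ j, vecCons (-∑ k, c k) c i * vecCons (-∑ k, c k) c j *
        K (vecCons o s i) (vecCons o s j)) / 2 := by
  simp only [Fin.sum_univ_succ, cons_val_zero, cons_val_succ, centeredKernel]
  simp only [mul_div_assoc', ← sum_div, mul_sub, mul_add, sum_add_distrib, sum_sub_distrib]
  simp only [mul_assoc, mul_neg, neg_mul, sum_neg_distrib, mul_left_comm (c _) (∑ k, c k),
    ← mul_sum, ← sum_mul]
  ring

theorem Matrix.posSemidef_of_sum_sum_nonneg {K : S → S → ℝ} (hsymm : ∀ x y, K x y = K y x)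
    (hK : ∀ n (s : Fin n → S) (c : Fin n → ℝ), 0 ≤ ∑ i, ∑ j, c i * c j * K (s i) (s j)) :
    (Matrix.of K).PosSemidef := by
  refine ⟨funext₂ fun x y => hsymm y x, fun f => ?_⟩
  set e := f.support.equivFin
  have sum_support_eq (g : S → ℝ) : ∑ x ∈ f.support, g x = ∑ i, g (e.symm i) := by
    rw [← sum_coe_sort, ← e.symm.sum_comp]
  simpa [Finsupp.sum, sum_support_eq, mul_right_comm] using
    hK _ (fun i => e.symm i) (fun i => f (e.symm i))

theorem IsCondPosDef.posSemidef_centeredKernel {K : S → S → ℝ} (hK : IsCondPosDef K)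
    (hsymm : ∀ x y, K x y = K y x) (o : S) : (Matrix.of (centeredKernel K o)).PosSemidef := by
  refine posSemidef_of_sum_sum_nonneg (fun x y => ?_) fun n s c => ?_
  · simp only [centeredKernel, hsymm x y, hsymm x o, hsymm o y]
    ring
  rcases n with _ | n
  · simp
  rw [sum_sum_centeredKernel]
  refine div_nonneg (hK _ (by omega) _ _ ?_) zero_le_two
  simp [Fin.sum_univ_succ]

end

section

variable {S : Type u} {K : S → S → ℝ}

-- Mathlib's RKHS construction takes operator-valued kernels; a scalar kernel becomes `K x y • id`.
theorem Matrix.PosSemidef.smul_id (hK : (Matrix.of K).PosSemidef) :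
    (Matrix.of fun x y => K x y • ContinuousLinearMap.id ℝ ℝ).PosSemidef := by
  have hsymm (x y : S) : K y x = K x y := by simpa using hK.1.apply x y
  have htfae := (RKHS.posSemidef_tfae
    (K := Matrix.of fun x y => K x y • ContinuousLinearMap.id ℝ ℝ)).out 0 2
  refine htfae.mpr ⟨?_, fun f => ?_⟩
  · ext x y : 1
    simp [ContinuousLinearMap.star_eq_adjoint, ContinuousLinearMap.adjoint_id, hsymm]
  · simpa [mul_comm, mul_left_comm, hsymm] using hK.2 f

theorem Matrix.PosSemidef.exists_inner_eq_s14 (hK : (Matrix.of K).PosSemidef) :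
    ∃ (H : Type u) (_ : NormedAddCommGroup H) (_ : InnerProductSpace ℝ H) (_ : CompleteSpace H)
      (φ : S → H), ∀ x y, ⟪φ x, φ y⟫_ℝ = K x y := by
  let K' := Matrix.of fun x y => K x y • ContinuousLinearMap.id ℝ ℝ
  have : Fact K'.PosSemidef := ⟨hK.smul_id⟩
  refine ⟨RKHS.OfKernel K', inferInstance, inferInstance, inferInstance,
    fun x => RKHS.kerFun (RKHS.OfKernel K') x 1, fun x y => ?_⟩
  rw [← RKHS.kernel_inner, RKHS.OfKernel.kernel_ofKernel]
  simpa [K'] using hK.1.apply x y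

theorem IsCondPosDef.exists_norm_sub_sq_eq (hK : IsCondPosDef K) (hsymm : ∀ x y, K x y = K y x)
    (hdiag : ∀ x, K x x = 0) :
    ∃ (H : Type u) (_ : NormedAddCommGroup H) (_ : InnerProductSpace ℝ H) (_ : CompleteSpace H)
      (φ : S → H), ∀ x y, ‖φ x - φ y‖ ^ 2 = -K x y := by
  cases isEmpty_or_nonempty S with
  | inl _ => exact ⟨PUnit, inferInstance, inferInstance, inferInstance, isEmptyElim, isEmptyElim⟩
  | inr hS =>
    obtain ⟨o⟩ := hS
    obtain ⟨H, _, _, _, φ, hφ⟩ := (hK.posSemidef_centeredKernel hsymm o).exists_inner_eq_s14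
    refine ⟨H, inferInstance, inferInstance, inferInstance, φ, fun x y => ?_⟩
    rw [norm_sub_sq_real, ← real_inner_self_eq_norm_sq, ← real_inner_self_eq_norm_sq, hφ, hφ, hφ]
    simp only [centeredKernel, hdiag, hsymm o x, hsymm o y]
    ring

end

/-- Schoenberg-type embedding theorem: a metric space `(S, d)` embeds isometrically into a real
Hilbert space if and only if the kernel `K(s,t) := −d(s,t)²` is conditionally positive definite,
i.e. `−∑ᵢⱼ cᵢ cⱼ d(sᵢ,sⱼ)² ≥ 0` whenever `n ≥ 2` and `∑ᵢ cᵢ = 0`. -/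
theorem metric_embeds_iff_neg_dist_sq_condPosDef {S : Type u} [MetricSpace S] :
    (∃ (H : Type u) (_ : NormedAddCommGroup H) (_ : InnerProductSpace ℝ H)
      (_ : CompleteSpace H) (V : S → H), ∀ s t, ‖V s - V t‖ = dist s t) ↔
    (∀ (n : ℕ), 2 ≤ n → ∀ (s : Fin n → S) (c : Fin n → ℝ), (∑ i, c i) = 0 →
      0 ≤ -∑ i, ∑ j, c i * c j * dist (s i) (s j) ^ 2) := by
  rw [← isCondPosDef_neg_iff (K := fun x y : S => dist x y ^ 2)]
  constructor
  · rintro ⟨H, _, _, _, V, hV⟩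
    simpa only [hV] using isCondPosDef_neg_norm_sub_sq V
  · intro h
    obtain ⟨H, _, _, _, φ, hφ⟩ := h.exists_norm_sub_sq_eq (fun x y => by rw [dist_comm])
      (fun x => by simp)
    refine ⟨H, inferInstance, inferInstance, inferInstance, φ, fun s t => ?_⟩
    rw [← sq_eq_sq₀ (norm_nonneg _) dist_nonneg, hφ, neg_neg]
end

section
/- Let H be a complex Hilbert space and T, P, Q ∈ B(H) with P ≥ 0 and Q ≥ 0. If the block operator [[P, T],[T*, Q]] is a positive operator on H ⊕ H, then T T* ≤ ‖Q‖ · P. -/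
/-!
Put `z = T† x` and test the positivity of the block operator on the vector `(x, -t z)`, `t` real:
since `re ⟪T z, x⟫ = ‖z‖²` and `re ⟪Q z, z⟫ ≤ ‖Q‖ ‖z‖²`, this gives
`0 ≤ re ⟪P x, x⟫ - 2 t ‖z‖² + t² ‖Q‖ ‖z‖²` for every `t`. The discriminant of this quadratic is
nonpositive, i.e. `‖z‖⁴ ≤ ‖Q‖ ‖z‖² re ⟪P x, x⟫`, whence `‖T† x‖² ≤ ‖Q‖ re ⟪P x, x⟫`,
which is `T T† ≤ ‖Q‖ P`.
-/

open ContinuousLinearMap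

theorem le_mul_of_forall_quadratic_nonneg {a b c : ℝ} (hb : 0 ≤ b) (hc : 0 ≤ c)
    (h : ∀ t : ℝ, 0 ≤ c * b * (t * t) + -2 * b * t + a) : b ≤ c * a := by
  have ha : 0 ≤ a := by simpa using h 0
  have hdiscrim : b * b ≤ b * (c * a) := by
    have := discrim_le_zero h
    unfold discrim at this
    nlinarith
  rcases hb.eq_or_lt with rfl | hb
  · positivity
  · exact le_of_mul_le_mul_left hdiscrim hb

namespace ContinuousLinearMap

open RCLike

section RCLike

variable {𝕜 E F : Type*} [RCLike 𝕜]
  [NormedAddCommGroup E] [InnerProductSpace 𝕜 E] [NormedAddCommGroup F] [InnerProductSpace 𝕜 F]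

theorem re_inner_apply_self_le_norm_mul_sq (Q : F →L[𝕜] F) (y : F) :
    re (inner 𝕜 (Q y) y) ≤ ‖Q‖ * ‖y‖ ^ 2 :=
  calc re (inner 𝕜 (Q y) y) ≤ ‖Q y‖ * ‖y‖ := re_inner_le_norm _ _
    _ ≤ ‖Q‖ * ‖y‖ * ‖y‖ := by gcongr; exact Q.le_opNorm y
    _ = ‖Q‖ * ‖y‖ ^ 2 := by ring

variable [CompleteSpace E] [CompleteSpace F] {P : E →L[𝕜] E} {T : F →L[𝕜] E} {Q : F →L[𝕜] F}
  {R : WithLp 2 (E × F) →L[𝕜] WithLp 2 (E × F)}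

theorem re_inner_apply_block (hR : ∀ x y, R ((WithLp.equiv 2 (E × F)).symm (x, y)) =
      (WithLp.equiv 2 (E × F)).symm (P x + T y, adjoint T x + Q y)) (x : E) (y : F) :
    re (inner 𝕜 (R ((WithLp.equiv 2 (E × F)).symm (x, y))) ((WithLp.equiv 2 (E × F)).symm (x, y)))
      = re (inner 𝕜 (P x) x) + 2 * re (inner 𝕜 (T y) x) + re (inner 𝕜 (Q y) y) := by
  have hcross : re (inner 𝕜 (adjoint T x) y) = re (inner 𝕜 (T y) x) := by
    rw [← inner_conj_symm, conj_re, adjoint_inner_right]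
  rw [hR]
  simp only [WithLp.prod_inner_apply, WithLp.equiv_symm_apply, inner_add_left, map_add, hcross]
  ring

theorem norm_adjoint_apply_sq_le_of_block_nonneg
    (hR : ∀ x y, R ((WithLp.equiv 2 (E × F)).symm (x, y)) =
      (WithLp.equiv 2 (E × F)).symm (P x + T y, adjoint T x + Q y))
    (hRpos : 0 ≤ R) (x : E) :
    ‖adjoint T x‖ ^ 2 ≤ ‖Q‖ * re (inner 𝕜 (P x) x) := by
  set z := adjoint T x
  refine le_mul_of_forall_quadratic_nonneg (sq_nonneg _) (norm_nonneg Q) fun t ↦ ?_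
  have hRtz := hRpos.re_inner_nonneg_left ((WithLp.equiv 2 (E × F)).symm (x, -(t : 𝕜) • z))
  rw [sub_zero, re_inner_apply_block hR] at hRtz
  have hcross : re (inner 𝕜 (T (-(t : 𝕜) • z)) x) = -t * ‖z‖ ^ 2 := by
    rw [← adjoint_inner_right, inner_smul_left, map_neg, conj_ofReal, neg_mul, map_neg,
      re_ofReal_mul, inner_self_eq_norm_sq, neg_mul]
  have hQ := re_inner_apply_self_le_norm_mul_sq Q (-(t : 𝕜) • z)
  rw [norm_smul, norm_neg, norm_ofReal, mul_pow, sq_abs] at hQ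
  nlinarith

end RCLike

theorem comp_adjoint_le_smul_of_norm_adjoint_apply_sq_le {E F : Type*}
    [NormedAddCommGroup E] [InnerProductSpace ℂ E] [CompleteSpace E]
    [NormedAddCommGroup F] [InnerProductSpace ℂ F] [CompleteSpace F]
    {P : E →L[ℂ] E} {T : F →L[ℂ] E} {c : ℝ} (hP : IsSelfAdjoint P)
    (h : ∀ x, ‖adjoint T x‖ ^ 2 ≤ c * re (inner ℂ (P x) x)) :
    T ∘L adjoint T ≤ c • P := by
  rw [le_def, isPositive_def']
  refine ⟨((IsSelfAdjoint.all c).smul hP).sub (isPositive_self_comp_adjoint T).isSelfAdjoint,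
    fun x ↦ ?_⟩
  have hTT : re (inner ℂ ((T ∘L adjoint T) x) x) = ‖adjoint T x‖ ^ 2 := by
    rw [comp_apply, ← adjoint_inner_right, inner_self_eq_norm_sq]
  rw [reApplyInnerSelf_apply, sub_apply, inner_sub_left, map_sub, hTT, smul_apply,
    ← algebraMap_smul ℂ, algebraMap_eq_ofReal, inner_smul_real_left, smul_re]
  exact sub_nonneg.mpr (h x)

end ContinuousLinearMap

theorem block_pos_imp_mul_adjoint_le_general {H : Type*} [NormedAddCommGroup H]
    [InnerProductSpace ℂ H] [CompleteSpace H]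
    (T P Q : H →L[ℂ] H) (hP : 0 ≤ P)
    (R : WithLp 2 (H × H) →L[ℂ] WithLp 2 (H × H))
    (hR : ∀ x y : H, R ((WithLp.equiv 2 (H × H)).symm (x, y)) =
      (WithLp.equiv 2 (H × H)).symm (P x + T y, adjoint T x + Q y))
    (hRpos : 0 ≤ R) :
    T * adjoint T ≤ ‖Q‖ • P :=
  comp_adjoint_le_smul_of_norm_adjoint_apply_sq_le hP.isSelfAdjoint
    (norm_adjoint_apply_sq_le_of_block_nonneg hR hRpos)

/-- If `P, Q ≥ 0` and the block operator `[[P, T], [T*, Q]]` on the Hilbert space direct sum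
`H ⊕ H` is positive, then `T T* ≤ ‖Q‖ • P`. -/
theorem block_pos_imp_mul_adjoint_le {H : Type*} [NormedAddCommGroup H]
    [InnerProductSpace ℂ H] [CompleteSpace H]
    (T P Q : H →L[ℂ] H) (hP : 0 ≤ P) (hQ : 0 ≤ Q)
    (R : WithLp 2 (H × H) →L[ℂ] WithLp 2 (H × H))
    (hR : ∀ x y : H, R ((WithLp.equiv 2 (H × H)).symm (x, y)) =
      (WithLp.equiv 2 (H × H)).symm (P x + T y, adjoint T x + Q y))
    (hRpos : 0 ≤ R) :
    T * adjoint T ≤ ‖Q‖ • P :=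
  block_pos_imp_mul_adjoint_le_general T P Q hP R hR hRpos
end

section
/- Let S be a nonempty set, A a C*-algebra, s₀ ∈ S, and K, K' : S × S → A hermitian kernels. Define L(s,t) := (1/2)(K(s,t) − K(s,s₀) − K(s₀,t) + K(s₀,s₀)) and L'(s,t) := (1/2)(K'(s,t) − K'(s,s₀) − K'(s₀,t) + K'(s₀,s₀)). Then K − K' is conditionally positive definite if and only if L − L' is positive definite. -/
/-!
Put `M := K - K'` and `L₀(s, t) := M(s, t) - M(s, s₀) - M(s₀, t) + M(s₀, s₀)`, so that
`L - L' = L₀ / 2`. When `∑ aᵢ = 0` the three correction terms of `L₀` drop out of the quadratic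
sum, so every quadratic sum of `M` with coefficients summing to zero is one of `L₀`. Conversely,
any quadratic sum of `L₀` at points `sᵢ` with coefficients `aᵢ` is the quadratic sum of `M` at
the points `s₀, s₁, …, sₙ` with coefficients `-∑ aᵢ, a₁, …, aₙ`, which sum to zero.
-/

open scoped ComplexOrder

section Algebra

variable {S A : Type*} [NonUnitalRing A] [StarRing A]

def kernelQuadSum (M : S → S → A) {n : ℕ} (s : Fin n → S) (a : Fin n → A) : A :=
  ∑ i, ∑ j, star (a i) * M (s i) (s j) * a j

def shiftKernel (M : S → S → A) (s₀ : S) (s t : S) : A :=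
  M s t - M s s₀ - M s₀ t + M s₀ s₀

lemma kernelQuadSum_smul {R : Type*} [Monoid R] [DistribMulAction R A] [SMulCommClass R A A]
    [IsScalarTower R A A] (c : R) (M : S → S → A) {n : ℕ} (s : Fin n → S) (a : Fin n → A) :
    kernelQuadSum (c • M) s a = c • kernelQuadSum M s a := by
  simp only [kernelQuadSum, Finset.smul_sum, Pi.smul_apply, mul_smul_comm, smul_mul_assoc]

lemma kernelQuadSum_shiftKernel_of_sum_eq_zero (M : S → S → A) (s₀ : S) {n : ℕ}
    (s : Fin n → S) (a : Fin n → A) (ha : ∑ i, a i = 0) :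
    kernelQuadSum (shiftKernel M s₀) s a = kernelQuadSum M s a := by
  have hstar : ∑ i, star (a i) = 0 := by rw [← star_sum, ha, star_zero]
  simp only [kernelQuadSum, shiftKernel, mul_sub, mul_add, sub_mul, add_mul,
    Finset.sum_sub_distrib, Finset.sum_add_distrib, ← Finset.mul_sum, ha, mul_zero,
    ← Finset.sum_mul, mul_assoc, hstar, zero_mul, sub_zero, add_zero]

lemma kernelQuadSum_cons (M : S → S → A) (s₀ : S) {n : ℕ} (s : Fin n → S) (a : Fin n → A) :
    kernelQuadSum M (Fin.cons s₀ s : Fin (n + 1) → S) (Fin.cons (-∑ i, a i) a) =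
      kernelQuadSum (shiftKernel M s₀) s a := by
  simp only [kernelQuadSum, shiftKernel, Fin.sum_univ_succ, Fin.cons_zero, Fin.cons_succ,
    mul_sub, mul_add, sub_mul, add_mul, Finset.sum_sub_distrib, Finset.sum_add_distrib,
    star_neg, neg_mul, mul_neg, Finset.sum_neg_distrib, ← Finset.mul_sum, ← Finset.sum_mul,
    star_sum, mul_assoc]
  abel

end Algebra

section CStarAlgebra

variable {S A : Type*} [NonUnitalCStarAlgebra A] [PartialOrder A]

lemma isPosDefKernel_smul_iff [StarOrderedRing A] {c : ℂ} (hc : 0 < c) (M : S → S → A) :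
    IsPosDefKernel (c • M) ↔ IsPosDefKernel M := by
  have nonneg_smul {d : ℂ} (hd : 0 ≤ d) (N : S → S → A) (hN : IsPosDefKernel N) :
      IsPosDefKernel (d • N) := fun n s a => by
    rw [← kernelQuadSum, kernelQuadSum_smul]
    exact smul_nonneg hd (hN n s a)
  refine ⟨fun h => ?_, nonneg_smul hc.le M⟩
  simpa [smul_smul, inv_mul_cancel₀ hc.ne'] using nonneg_smul (inv_nonneg.mpr hc.le) _ h

lemma isCondPosDefKernel_iff_isPosDefKernel_shiftKernel (M : S → S → A) (s₀ : S) :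
    IsCondPosDefKernel M ↔ IsPosDefKernel (shiftKernel M s₀) := by
  constructor
  · rintro h (_ | n) s a
    · simp
    have hsum : ∑ i, (Fin.cons (-∑ i, a i) a : Fin (n + 2) → A) i = 0 := by
      simp [Fin.sum_univ_succ]
    have := h (n + 2) (by omega) (Fin.cons s₀ s) _ hsum
    rwa [← kernelQuadSum, kernelQuadSum_cons] at this
  · intro h n _ s a ha
    have := h n s a
    rwa [← kernelQuadSum, kernelQuadSum_shiftKernel_of_sum_eq_zero M s₀ s a ha] at this

end CStarAlgebra

theorem sub_condPosDef_iff_sub_posDef_general {S A : Type*}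
    [NonUnitalCStarAlgebra A] [PartialOrder A] [StarOrderedRing A] (s₀ : S)
    (K K' : S → S → A)
    (L L' : S → S → A)
    (hL : ∀ s t, L s t = (2⁻¹ : ℂ) • (K s t - K s s₀ - K s₀ t + K s₀ s₀))
    (hL' : ∀ s t, L' s t = (2⁻¹ : ℂ) • (K' s t - K' s s₀ - K' s₀ t + K' s₀ s₀)) :
    IsCondPosDefKernel (fun s t => K s t - K' s t) ↔
      IsPosDefKernel (fun s t => L s t - L' s t) := by
  have hLL : (fun s t => L s t - L' s t) =
      (2⁻¹ : ℂ) • shiftKernel (fun s t => K s t - K' s t) s₀ := by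
    funext s t
    rw [hL, hL', ← smul_sub]
    simp only [Pi.smul_apply, shiftKernel]
    congr 1
    abel
  rw [hLL, isPosDefKernel_smul_iff (by norm_num),
    isCondPosDefKernel_iff_isPosDefKernel_shiftKernel _ s₀]

/-- For hermitian kernels `K, K'` and their associated shifted kernels `L, L'` at `s₀`,
`K − K'` is conditionally positive definite iff `L − L'` is positive definite. -/
theorem sub_condPosDef_iff_sub_posDef {S A : Type*} [Nonempty S]
    [NonUnitalCStarAlgebra A] [PartialOrder A] [StarOrderedRing A] (s₀ : S)
    (K K' : S → S → A) (hK : IsHermitianKernel K) (hK' : IsHermitianKernel K')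
    (L L' : S → S → A)
    (hL : ∀ s t, L s t = (2⁻¹ : ℂ) • (K s t - K s s₀ - K s₀ t + K s₀ s₀))
    (hL' : ∀ s t, L' s t = (2⁻¹ : ℂ) • (K' s t - K' s s₀ - K' s₀ t + K' s₀ s₀)) :
    IsCondPosDefKernel (fun s t => K s t - K' s t) ↔
      IsPosDefKernel (fun s t => L s t - L' s t) :=
  sub_condPosDef_iff_sub_posDef_general s₀ K K' L L' hL hL'
end
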